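/- The communication height between the two metastable states is bounded below by Γ*: Γ(𝟐,𝟑) ≥ Γ*. -/

import Mathlib

namespace GenPotts

/-- Spin values: `0` represents spin `1`, `1` represents spin `2`, `2` represents spin `3`. -/
abbrev Spin := Fin 3

/-- Vertices of the two-dimensional discrete torus. -/
abbrev Vtx (K L : ℕ) := ZMod K × ZMod L

/-- Spin configurations. -/
abbrev Config (K L : ℕ) := Vtx K L → Spin

section Defs

variable (K L : ℕ)

/-- The constant configuration with all spins equal to `r`. -/
def const (r : Spin) : Config K L := fun _ => r

variable [NeZero K] [NeZero L]

/-- The number of (unordered nearest-neighbour) edges of the torus whose endpoint spins are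
`i` and `j`.  Each edge is represented exactly once as a pair (vertex, direction), where the
direction `true` points right and `false` points up. -/
def nEdge (σ : Config K L) (i j : Spin) : ℕ :=
  ((Finset.univ : Finset (Vtx K L × Bool)).filter (fun p =>
    (σ p.1 = i ∧ σ (if p.2 then (p.1.1 + 1, p.1.2) else (p.1.1, p.1.2 + 1)) = j) ∨
    (σ p.1 = j ∧ σ (if p.2 then (p.1.1 + 1, p.1.2) else (p.1.1, p.1.2 + 1)) = i))).card

/-- The number of vertices with spin `i`. -/
def nVtx (σ : Config K L) (i : Spin) : ℕ :=
  ((Finset.univ : Finset (Vtx K L)).filter (fun v => σ v = i)).card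

end Defs

/-- The coupling constants of the generalized Potts model. -/
structure Couplings where
  J11 : ℝ
  J22 : ℝ
  J33 : ℝ
  J12 : ℝ
  J13 : ℝ
  J23 : ℝ

namespace Couplings

def γ1 (C : Couplings) : ℝ := C.J11 - C.J22
def γ12 (C : Couplings) : ℝ := C.J12 + C.J22
def γ23 (C : Couplings) : ℝ := C.J23 + C.J22

end Couplings

/-- The Hamiltonian of the generalized three-state Potts model. -/
noncomputable def H (K L : ℕ) [NeZero K] [NeZero L] (C : Couplings) (σ : Config K L) : ℝ :=
  -(C.J11 * nEdge K L σ 0 0 + C.J22 * nEdge K L σ 1 1 + C.J33 * nEdge K L σ 2 2)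
    + C.J12 * nEdge K L σ 0 1 + C.J13 * nEdge K L σ 0 2 + C.J23 * nEdge K L σ 1 2

/-- The auxiliary function `f_h`. -/
noncomputable def fh (h x : ℝ) : ℝ :=
  4 * (x + h / 2) * (⌈(x + h / 2) / h⌉ : ℝ)
    - 2 * h * ((⌈(x + h / 2) / h⌉ : ℝ) ^ 2 - (⌈(x + h / 2) / h⌉ : ℝ) + 1)

/-- The critical length `ℓ*`. -/
noncomputable def lstar (C : Couplings) : ℕ := ⌈(2 * C.γ12 + C.γ1) / (2 * C.γ1)⌉₊

/-- The critical energy barrier `Γ*`. -/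
noncomputable def Γstar (C : Couplings) : ℝ := fh C.γ1 C.γ12

/-- The standing assumptions on the lattice sizes and the coupling constants. -/
structure Admissible (K L : ℕ) (C : Couplings) : Prop where
  hKL : K ≤ L
  hK : 2 * lstar C ^ 2 ≤ K
  pos11 : 0 < C.J11
  pos22 : 0 < C.J22
  pos33 : 0 < C.J33
  pos12 : 0 < C.J12
  pos13 : 0 < C.J13
  pos23 : 0 < C.J23
  h1122 : C.J22 < C.J11
  h2233 : C.J22 = C.J33
  h1213 : C.J12 = C.J13
  hA : ∀ n : ℤ, (2 * C.γ12 + C.γ1) / (2 * C.γ1) ≠ (n : ℝ)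
  hB : fh C.γ1 C.γ12 = 2 * (K + 1) * C.γ23
  hC : 4 * C.γ23 + C.γ1 ≤ 2 * C.γ12

section Paths

variable (K L : ℕ) [NeZero K] [NeZero L]

/-- Two configurations differ at exactly one vertex. -/
def SingleFlip (σ σ' : Config K L) : Prop :=
  ∃ v, σ v ≠ σ' v ∧ ∀ w, w ≠ v → σ w = σ' w

/-- A path: a finite sequence of configurations in which consecutive configurations differ
at exactly one vertex. -/
structure Path where
  len : ℕ
  toFun : ℕ → Config K L
  step : ∀ n, n < len → SingleFlip K L (toFun n) (toFun (n + 1))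

/-- The height of a path: the maximum of `H` along it. -/
noncomputable def Path.height {K L : ℕ} [NeZero K] [NeZero L] (ω : Path K L)
    (C : Couplings) : ℝ :=
  Finset.sup' (Finset.range (ω.len + 1))
    (Finset.nonempty_range_iff.mpr (Nat.succ_ne_zero _))
    (fun n => H K L C (ω.toFun n))

/-- The path goes from `σ` to `σ'`. -/
def Path.FromTo {K L : ℕ} [NeZero K] [NeZero L] (ω : Path K L)
    (σ σ' : Config K L) : Prop :=
  ω.toFun 0 = σ ∧ ω.toFun ω.len = σ'

/-- A path is an `ij`-path if every configuration along it has all spins in `{i, j}`. -/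
def Path.OnlySpins {K L : ℕ} [NeZero K] [NeZero L] (ω : Path K L) (i j : Spin) : Prop :=
  ∀ n ≤ ω.len, ∀ v, ω.toFun n v = i ∨ ω.toFun n v = j

/-- The communication height `Φ(σ, σ')`: the minimal height over paths from `σ` to `σ'`. -/
noncomputable def Phi (C : Couplings) (σ σ' : Config K L) : ℝ :=
  sInf {x | ∃ ω : Path K L, ω.FromTo σ σ' ∧ ω.height C = x}

/-- The communication height `Φ(σ, A)` between `σ` and a set `A`. -/
noncomputable def PhiSet (C : Couplings) (σ : Config K L) (A : Set (Config K L)) : ℝ :=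
  sInf {x | ∃ ω : Path K L, ω.toFun 0 = σ ∧ ω.toFun ω.len ∈ A ∧ ω.height C = x}

/-- The energy barrier `Γ(σ, σ') = Φ(σ, σ') − H(σ)`. -/
noncomputable def Gamma (C : Couplings) (σ σ' : Config K L) : ℝ :=
  Phi K L C σ σ' - H K L C σ

/-- The stability level `V_σ = Φ(σ, I_σ) − H(σ)` where `I_σ = {η : H(η) < H(σ)}`. -/
noncomputable def stabLevel (C : Couplings) (σ : Config K L) : ℝ :=
  PhiSet K L C σ {η | H K L C η < H K L C σ} - H K L C σ

/-- The set `X^s` of global minimizers of `H`. -/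
def Xs (C : Couplings) : Set (Config K L) :=
  {σ | ∀ η, H K L C σ ≤ H K L C η}

/-- The set `X^m` of metastable configurations. -/
noncomputable def Xm (C : Couplings) : Set (Config K L) :=
  {η | η ∉ Xs K L C ∧
    stabLevel K L C η = sSup {x | ∃ σ, σ ∉ Xs K L C ∧ stabLevel K L C σ = x}}

/-- The projection operator `P^{rs}` replacing every spin `r` by `s`. -/
def proj (r s : Spin) (σ : Config K L) : Config K L :=
  fun v => if σ v = r then s else σ v

/-- The initial cycle `C_r = {σ : Φ(𝐫, σ) < H(𝟐) + Γ*}`. -/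
noncomputable def initCycle (C : Couplings) (r : Spin) : Set (Config K L) :=
  {σ | Phi K L C (const K L r) σ < H K L C (const K L 1) + Γstar C}

/-- An optimal path from `σ` to `σ'`: a path whose height equals `Φ(σ, σ')`. -/
noncomputable def OptPath (C : Couplings) (σ σ' : Config K L) (ω : Path K L) : Prop :=
  ω.FromTo σ σ' ∧ ω.height C = Phi K L C σ σ'

/-- The configurations at which `H` attains its maximum along a path. -/
noncomputable def pathArgmax (C : Couplings) (ω : Path K L) : Set (Config K L) :=
  {ξ | (∃ n ≤ ω.len, ω.toFun n = ξ) ∧ H K L C ξ = ω.height C}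

/-- The set of minimal saddles `S(σ, σ')`. -/
noncomputable def Saddles (C : Couplings) (σ σ' : Config K L) : Set (Config K L) :=
  {ξ | ∃ ω : Path K L, OptPath K L C σ σ' ω ∧ ξ ∈ pathArgmax K L C ω}

/-- `W` is a gate for the transition `σ → σ'`. -/
noncomputable def IsGate (C : Couplings) (σ σ' : Config K L) (W : Set (Config K L)) : Prop :=
  W ⊆ Saddles K L C σ σ' ∧
    ∀ ω : Path K L, OptPath K L C σ σ' ω → ∃ n ≤ ω.len, ω.toFun n ∈ W

/-- `W` is a minimal gate for the transition `σ → σ'`. -/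
noncomputable def IsMinimalGate (C : Couplings) (σ σ' : Config K L)
    (W : Set (Config K L)) : Prop :=
  IsGate K L C σ σ' W ∧
    ∀ W', W' ⊂ W → ∃ ω : Path K L, OptPath K L C σ σ' ω ∧ ∀ n ≤ ω.len, ω.toFun n ∉ W'

/-- `G(σ, σ')`: the union of all minimal gates for the transition `σ → σ'`. -/
noncomputable def gateUnion (C : Couplings) (σ σ' : Config K L) : Set (Config K L) :=
  {ξ | ∃ W, IsMinimalGate K L C σ σ' W ∧ ξ ∈ W}

end Paths

section Geometry

variable (K L : ℕ)

/-- The `a × b` rectangle (`a` columns, `b` rows) with lower-left corner `(x0, y0)`. -/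
def rectSet (x0 : ZMod K) (y0 : ZMod L) (a b : ℕ) : Set (Vtx K L) :=
  {v | ∃ i j : ℕ, i < a ∧ j < b ∧ v = (x0 + (i : ZMod K), y0 + (j : ZMod L))}

/-- A vertical bar of `l` consecutive cells in column `x` starting at row `y0`. -/
def barV (x : ZMod K) (y0 : ZMod L) (l : ℕ) : Set (Vtx K L) :=
  {v | ∃ j : ℕ, j < l ∧ v = (x, y0 + (j : ZMod L))}

/-- A horizontal bar of `l` consecutive cells in row `y` starting at column `x0`. -/
def barH (x0 : ZMod K) (y : ZMod L) (l : ℕ) : Set (Vtx K L) :=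
  {v | ∃ i : ℕ, i < l ∧ v = (x0 + (i : ZMod K), y)}

/-- The configuration with spin `s` exactly on the set `A` and spin `r` elsewhere. -/
noncomputable def onSet (A : Set (Vtx K L)) (r s : Spin) : Config K L :=
  fun v => @ite _ (v ∈ A) (Classical.dec _) s r

/-- `R_{a,b}(r,s)`: configurations equal to `r` everywhere except for spins `s` on an
`a × b` rectangle. -/
noncomputable def Rconf (a b : ℕ) (r s : Spin) : Set (Config K L) :=
  {σ | ∃ x0 y0, σ = onSet K L (rectSet K L x0 y0 a b) r s}

/-- `B^l_{a,b}(r,s)`: configurations equal to `r` everywhere except for spins `s` on an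
`a × b` rectangle together with a bar of `l` consecutive cells attached to one of the
(vertical) sides of length `b`. -/
noncomputable def Bconf (a b l : ℕ) (r s : Spin) : Set (Config K L) :=
  {σ | ∃ (x0 : ZMod K) (y0 : ZMod L) (x : ZMod K) (j0 : ℕ),
      (x = x0 - 1 ∨ x = x0 + (a : ZMod K)) ∧ j0 + l ≤ b ∧
      σ = onSet K L (rectSet K L x0 y0 a b ∪ barV K L x (y0 + (j0 : ZMod L)) l) r s}

/-- `B̂^l_{a,b}(r,s)`: as `B^l_{a,b}(r,s)` but with the bar attached to one of the
(horizontal) sides of length `a`. -/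
noncomputable def Bhat (a b l : ℕ) (r s : Spin) : Set (Config K L) :=
  {σ | ∃ (x0 : ZMod K) (y0 : ZMod L) (y : ZMod L) (i0 : ℕ),
      (y = y0 - 1 ∨ y = y0 + (b : ZMod L)) ∧ i0 + l ≤ a ∧
      σ = onSet K L (rectSet K L x0 y0 a b ∪ barH K L (x0 + (i0 : ZMod K)) y l) r s}

/-- The critical set `W(𝐦, 𝟏) = B^1_{ℓ*−1,ℓ*}(m,1) ∪ B̂^1_{ℓ*,ℓ*−1}(m,1)`. -/
noncomputable def Wcrit (C : Couplings) (m : Spin) : Set (Config K L) :=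
  Bconf K L (lstar C - 1) (lstar C) 1 m 0 ∪ Bhat K L (lstar C) (lstar C - 1) 1 m 0

/-- The set `W'(𝐦, 𝟏) = B̂^1_{ℓ*−1,ℓ*}(m,1) ∪ B^1_{ℓ*,ℓ*−1}(m,1)`. -/
noncomputable def Wcrit' (C : Couplings) (m : Spin) : Set (Config K L) :=
  Bhat K L (lstar C - 1) (lstar C) 1 m 0 ∪ Bconf K L (lstar C) (lstar C - 1) 1 m 0

/-- The set `𝒫(𝐫, 𝐬)`. -/
noncomputable def Pgate (r s : Spin) : Set (Config K L) :=
  Bconf K L 1 K (K - 1) r s ∪ (if K = L then Bhat K L K 1 (K - 1) r s else ∅)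

/-- The set `𝒬(𝐫, 𝐬)`. -/
noncomputable def Qgate (r s : Spin) : Set (Config K L) :=
  Rconf K L 2 (K - 1) r s ∪ Bconf K L 1 K (K - 2) r s ∪
    (if K = L then Rconf K L (K - 1) 2 r s ∪ Bhat K L K 1 (K - 2) r s else ∅)

/-- The set `ℋ_i(𝐫, 𝐬)`. -/
noncomputable def Hgate (i : ℕ) (r s : Spin) : Set (Config K L) :=
  Bconf K L 1 K i r s ∪ (⋃ j ∈ Finset.Icc (i + 1) (K - 2), Bconf K L 1 (K - 1) j r s) ∪
    (if K = L then
      Bhat K L K 1 i r s ∪ ⋃ j ∈ Finset.Icc (i + 1) (K - 2), Bhat K L (K - 1) 1 j r s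
    else ∅)

/-- The set `𝒲^h_j(𝐫, 𝐬)`. -/
noncomputable def Wgate (j h : ℕ) (r s : Spin) : Set (Config K L) :=
  Bconf K L j K h r s ∪ (if K = L then Bhat K L K j h r s else ∅)

/-- The admissible gate collection for the transition between `𝟐` and `𝟑`. -/
noncomputable def gateCollection : Set (Set (Config K L)) :=
  {A | (∃ j h, 2 ≤ j ∧ j ≤ L - 3 ∧ 1 ≤ h ∧ h ≤ K - 1 ∧ A = Wgate K L j h 1 2)
    ∨ A = Qgate K L 1 2 ∨ A = Pgate K L 1 2 ∨ A = Pgate K L 2 1 ∨ A = Qgate K L 2 1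
    ∨ (∃ i, 1 ≤ i ∧ i ≤ K - 3 ∧ A = Hgate K L i 1 2)
    ∨ (∃ i, 1 ≤ i ∧ i ≤ K - 3 ∧ A = Hgate K L i 2 1)}

/-- The union `𝒲(𝟐, 𝟑)` of all the plateau gates between `𝟐` and `𝟑`. -/
noncomputable def W23 : Set (Config K L) :=
  (⋃ i ∈ Finset.Icc 1 (K - 3), Hgate K L i 1 2) ∪ Qgate K L 1 2 ∪ Pgate K L 1 2 ∪
    (⋃ j ∈ Finset.Icc 2 (L - 3), ⋃ h ∈ Finset.Icc 1 (K - 1), Wgate K L j h 1 2) ∪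
    Pgate K L 2 1 ∪ Qgate K L 2 1 ∪ (⋃ i ∈ Finset.Icc 1 (K - 3), Hgate K L i 2 1)

/-- Nearest-neighbour adjacency on the torus. -/
def Adj (v w : Vtx K L) : Prop :=
  w = (v.1 + 1, v.2) ∨ w = (v.1 - 1, v.2) ∨ w = (v.1, v.2 + 1) ∨ w = (v.1, v.2 - 1)

/-- An `r`-cluster of `σ`: a maximal connected set of vertices all having spin `r`. -/
def IsCluster (σ : Config K L) (r : Spin) (A : Set (Vtx K L)) : Prop :=
  A.Nonempty ∧ (∀ v ∈ A, σ v = r) ∧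
    (∀ v ∈ A, ∀ w ∈ A,
      Relation.ReflTransGen (fun a b => a ∈ A ∧ b ∈ A ∧ Adj K L a b) v w) ∧
    (∀ v ∈ A, ∀ w, Adj K L v w → σ w = r → w ∈ A)

/-- A set of vertices is a rectangle: the product of a set of consecutive columns and a set
of consecutive rows of the torus. -/
def IsRectangle (A : Set (Vtx K L)) : Prop :=
  ∃ (x0 : ZMod K) (y0 : ZMod L) (a b : ℕ), a ≤ K ∧ b ≤ L ∧ A = rectSet K L x0 y0 a b

end Geometry

section LocalMin

variable (K L : ℕ) [NeZero K] [NeZero L]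

/-- The set `M` of strict local minima of `H`. -/
noncomputable def Mset (C : Couplings) : Set (Config K L) :=
  {σ | ∀ σ', SingleFlip K L σ σ' → H K L C σ < H K L C σ'}

/-- A stable plateau: a nonempty set of configurations of constant energy, connected under
single spin flips, such that every configuration outside it reachable by a single spin flip
has strictly larger energy. -/
noncomputable def IsStablePlateau (C : Couplings) (D : Set (Config K L)) : Prop :=
  D.Nonempty ∧ (∃ c, ∀ σ ∈ D, H K L C σ = c) ∧
    (∀ σ ∈ D, ∀ η ∈ D,
      Relation.ReflTransGen (fun a b => a ∈ D ∧ b ∈ D ∧ SingleFlip K L a b) σ η) ∧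
    (∀ σ ∈ D, ∀ σ', SingleFlip K L σ σ' → σ' ∉ D → H K L C σ < H K L C σ')

/-- The union `M̄` of all stable plateaux. -/
noncomputable def Mbar (C : Couplings) : Set (Config K L) :=
  {σ | ∃ D, IsStablePlateau K L C D ∧ σ ∈ D}

end LocalMin


/-!
Write `a` for the number of spins `0` (the paper's spin `1`; `𝟐` and `𝟑` are `const K L 1` and
`const K L 2`), `P` for the perimeter of their region and `c`, `r` for the numbers of columns and
rows meeting it. Since no line is filled, each of these lines crosses the boundary twice, so
`P ≥ 2 (c + r)`, while `a ≤ c r`. The energy above `𝟐` is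
`(γ₁₂ + γ₁/2) P − 2γ₁ a + γ₂₃ · #{1–2 edges}`.

Along a path from `𝟐` to `𝟑`, `a` changes by at most one per flip. If it reaches the critical
volume `ℓ*(ℓ*−1)+1`, then `c + r ≥ 2ℓ*` and the energy is already `Γ*`. Otherwise the
isoperimetric bounds show that the energy dominates `γ₂₃ M`, where `M` charges `1` per `1`–`2`
edge and `2` per edge at a spin `0`; so on a path below `Γ* = 2(K+1)γ₂₃` we have `M ≤ 2K+1`.
Every line that is not constant costs at least `2`, hence such a configuration has all columns
constant, all rows constant, or one spin meeting every line. This rigidity makes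
"spin `1` meets every line, or there is a single line of spin `2` in a sea of spin `1`" invariant
under single flips; it holds at `𝟐` and fails at `𝟑`.
-/

open Finset

section General

variable {α : Type*} {n : ℕ}

structure IsPseudoDist (d : α → α → ℕ) : Prop where
  refl : ∀ i, d i i = 0
  symm : ∀ i j, d i j = d j i
  triangle : ∀ i j k, d i k ≤ d i j + d j k

lemma sum_zmod_eq_sum_range [NeZero n] {M : Type*} [AddCommMonoid M] (F : ZMod n → M)
    (y₀ : ZMod n) : ∑ y, F y = ∑ j ∈ range n, F (y₀ + j) := by
  refine (sum_nbij' (fun j : ℕ => y₀ + (j : ZMod n)) (fun y => (y - y₀).val)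
    ?_ ?_ ?_ ?_ ?_).symm
  · simp
  · simp [ZMod.val_lt]
  · intro j hj
    simp [ZMod.val_cast_of_lt (mem_range.mp hj)]
  · simp
  · simp

lemma IsPseudoDist.le_sum_arc {d : α → α → ℕ} (hd : IsPseudoDist d) (f : ZMod n → α)
    (y : ZMod n) (k : ℕ) :
    d (f y) (f (y + k)) ≤ ∑ j ∈ range k, d (f (y + j)) (f (y + j + 1)) := by
  induction k with
  | zero => simp [hd.refl]
  | succ k ih =>
    rw [sum_range_succ, Nat.cast_succ, ← add_assoc]
    exact (hd.triangle _ _ _).trans (Nat.add_le_add_right ih _)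

lemma IsPseudoDist.two_mul_le_sum_cycle [NeZero n] {d : α → α → ℕ} (hd : IsPseudoDist d)
    (f : ZMod n → α) (y₁ y₂ : ZMod n) : 2 * d (f y₁) (f y₂) ≤ ∑ y, d (f y) (f (y + 1)) := by
  set k := (y₂ - y₁).val
  have hkn : k ≤ n := (ZMod.val_lt _).le
  have hy₂ : y₁ + k = y₂ := by simp [k]
  have hy₁ : y₂ + ((n - k : ℕ) : ZMod n) = y₁ := by
    rw [Nat.cast_sub hkn, ZMod.natCast_self, ← hy₂]; ring
  have harc₁ := hd.le_sum_arc f y₁ k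
  have harc₂ := hd.le_sum_arc f y₂ (n - k)
  rw [hy₂] at harc₁
  rw [hy₁, hd.symm] at harc₂
  have hsplit := sum_range_add (fun j : ℕ => d (f (y₁ + j)) (f (y₁ + j + 1))) k (n - k)
  simp only [Nat.add_sub_cancel' hkn, Nat.cast_add, ← add_assoc, hy₂] at hsplit
  rw [sum_zmod_eq_sum_range _ y₁, hsplit]
  omega

lemma exists_ne_and_ne_of_two_lt_card [Fintype α] [DecidableEq α] (h : 2 < Fintype.card α)
    (a b : α) : ∃ c, c ≠ a ∧ c ≠ b := by
  obtain ⟨c, -, hc⟩ := exists_mem_notMem_of_card_lt_card (s := {a, b}) (t := univ)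
    ((card_insert_le a {b}).trans_lt (by simpa using h))
  simp only [mem_insert, mem_singleton, not_or] at hc
  exact ⟨c, hc⟩

end General

section EdgeSums

variable {K L : ℕ}

def transpose (σ : Config K L) : Config L K := fun v => σ (v.2, v.1)

@[simp] lemma transpose_transpose (σ : Config K L) : transpose (transpose σ) = σ := rfl

variable [NeZero K] [NeZero L] {M : Type*} [AddCommMonoid M]

/-- Edges are the pairs (vertex, direction) of `nEdge`; this is the far endpoint. -/
def edgeEnd (p : Vtx K L × Bool) : Vtx K L :=
  if p.2 then (p.1.1 + 1, p.1.2) else (p.1.1, p.1.2 + 1)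

def edgeSum (w : Spin → Spin → M) (σ : Config K L) : M :=
  ∑ p : Vtx K L × Bool, w (σ p.1) (σ (edgeEnd p))

/-- Rows are handled as the columns of `transpose σ`. -/
def colSum (w : Spin → Spin → M) (σ : Config K L) (x : ZMod K) : M :=
  ∑ y, w (σ (x, y)) (σ (x, y + 1))

lemma edgeSum_eq_sum_colSum (w : Spin → Spin → M) (σ : Config K L) :
    edgeSum w σ = ∑ x, colSum w σ x + ∑ y, colSum w (transpose σ) y := by
  simp only [edgeSum, colSum, transpose, Fintype.sum_prod_type, Fintype.sum_bool, edgeEnd,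
    if_true, Bool.false_eq_true, if_false, sum_add_distrib]
  rw [add_comm]
  exact congrArg _ sum_comm

lemma edgeSum_transpose (w : Spin → Spin → M) (σ : Config K L) :
    edgeSum w (transpose σ) = edgeSum w σ := by
  rw [edgeSum_eq_sum_colSum, edgeSum_eq_sum_colSum, transpose_transpose, add_comm]

lemma nVtx_transpose (σ : Config K L) (i : Spin) :
    nVtx L K (transpose σ) i = nVtx K L σ i :=
  card_equiv (Equiv.prodComm _ _) fun v => by
    rw [mem_filter, mem_filter]; simp [transpose, Prod.swap]

end EdgeSums

section Energy

def perimWeight (i j : Spin) : ℕ := if i = j then 0 else if i = 0 ∨ j = 0 then 1 else 0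

def mixedWeight (i j : Spin) : ℕ := if i = j then 0 else if i = 0 ∨ j = 0 then 0 else 1

def zeroEnds (i j : Spin) : ℕ := (if i = 0 then 1 else 0) + (if j = 0 then 1 else 0)

noncomputable def bondEnergy (C : Couplings) (i j : Spin) : ℝ :=
  if i = j then (if i = 0 then -C.J11 else if i = 1 then -C.J22 else -C.J33)
  else if i = 0 ∨ j = 0 then (if i = 1 ∨ j = 1 then C.J12 else C.J13) else C.J23

variable {K L : ℕ} [NeZero K] [NeZero L] (C : Couplings)

lemma nEdge_eq_edgeSum (σ : Config K L) (i j : Spin) :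
    (nEdge K L σ i j : ℝ) =
      edgeSum (fun a b => if (a = i ∧ b = j) ∨ (a = j ∧ b = i) then (1 : ℝ) else 0) σ := by
  rw [nEdge, card_filter, Nat.cast_sum]
  simp only [edgeSum, edgeEnd, Nat.cast_ite, Nat.cast_one, Nat.cast_zero]
  rfl

lemma H_eq_edgeSum (σ : Config K L) : H K L C σ = edgeSum (bondEnergy C) σ := by
  have hbond : ∀ i j : Spin, bondEnergy C i j =
      -(C.J11 * (if (i = 0 ∧ j = 0) ∨ (i = 0 ∧ j = 0) then 1 else 0)
        + C.J22 * (if (i = 1 ∧ j = 1) ∨ (i = 1 ∧ j = 1) then 1 else 0)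
        + C.J33 * (if (i = 2 ∧ j = 2) ∨ (i = 2 ∧ j = 2) then 1 else 0))
      + C.J12 * (if (i = 0 ∧ j = 1) ∨ (i = 1 ∧ j = 0) then 1 else 0)
      + C.J13 * (if (i = 0 ∧ j = 2) ∨ (i = 2 ∧ j = 0) then 1 else 0)
      + C.J23 * (if (i = 1 ∧ j = 2) ∨ (i = 2 ∧ j = 1) then 1 else 0) := by
    intro i j
    fin_cases i <;> fin_cases j <;> simp [bondEnergy]
  simp only [H, nEdge_eq_edgeSum, edgeSum, hbond, sum_add_distrib, sum_neg_distrib, mul_sum]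

lemma edgeSum_zeroEnds (σ : Config K L) : edgeSum zeroEnds σ = 4 * nVtx K L σ 0 := by
  have hcount : nVtx K L σ 0 = ∑ v, if σ v = 0 then 1 else 0 := card_filter _ _
  have hshift (b : Bool) :
      ∑ v : Vtx K L, (if σ (edgeEnd (v, b)) = 0 then 1 else 0) = nVtx K L σ 0 := by
    rw [hcount]
    refine Fintype.sum_equiv (Equiv.addRight (if b then (1, 0) else (0, 1))) _ _ fun v => ?_
    cases b <;> simp [edgeEnd, Prod.add_def]
  simp only [edgeSum, zeroEnds, Fintype.sum_prod_type_right, sum_add_distrib, hshift, ← hcount,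
    Fintype.sum_bool]
  ring

lemma bondEnergy_sub_bondEnergy_one (h2233 : C.J22 = C.J33) (h1213 : C.J12 = C.J13)
    (i j : Spin) :
    bondEnergy C i j - bondEnergy C 1 1 = (C.γ12 + C.γ1 / 2) * perimWeight i j
      - C.γ1 / 2 * zeroEnds i j + C.γ23 * mixedWeight i j := by
  fin_cases i <;> fin_cases j <;>
    simp [bondEnergy, perimWeight, zeroEnds, mixedWeight, Couplings.γ1, Couplings.γ12,
      Couplings.γ23, h2233, h1213, neg_add_eq_sub]

lemma H_sub_H_const_one (h2233 : C.J22 = C.J33) (h1213 : C.J12 = C.J13) (σ : Config K L) :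
    H K L C σ - H K L C (const K L 1) = (C.γ12 + C.γ1 / 2) * edgeSum perimWeight σ
      - 2 * C.γ1 * nVtx K L σ 0 + C.γ23 * edgeSum mixedWeight σ := by
  have hzero : ((edgeSum zeroEnds σ : ℕ) : ℝ) = 4 * nVtx K L σ 0 := by
    rw [edgeSum_zeroEnds]; push_cast; ring
  simp only [edgeSum, Nat.cast_sum] at hzero ⊢
  rw [H_eq_edgeSum, H_eq_edgeSum, edgeSum, edgeSum, ← sum_sub_distrib]
  simp only [const, bondEnergy_sub_bondEnergy_one C h2233 h1213, sum_add_distrib,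
    sum_sub_distrib, ← mul_sum, hzero]
  ring

end Energy

section Isoperimetry

variable {K L : ℕ} [NeZero K] [NeZero L]

lemma perimWeight_isPseudoDist : IsPseudoDist perimWeight := ⟨by decide, by decide, by decide⟩

lemma perimWeight_zero_left : ∀ s, s ≠ 0 → perimWeight 0 s = 1 := by decide

def zeroCols (σ : Config K L) : Finset (ZMod K) := univ.filter fun x => ∃ y, σ (x, y) = 0

lemma nVtx_zero_le_card_mul (σ : Config K L) :
    nVtx K L σ 0 ≤ #(zeroCols σ) * #(zeroCols (transpose σ)) := by
  rw [← card_product]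
  refine card_le_card fun v hv => ?_
  simp only [mem_filter, mem_univ, true_and] at hv
  simp only [zeroCols, mem_product, mem_filter, mem_univ, true_and]
  exact ⟨⟨v.2, hv⟩, ⟨v.1, hv⟩⟩

lemma le_nVtx_of_col_eq (σ : Config K L) (x : ZMod K) (s : Spin) (h : ∀ y, σ (x, y) = s) :
    L ≤ nVtx K L σ s := by
  calc L = #(univ.image fun y : ZMod L => (x, y)) := by
        rw [card_image_of_injective _ (Prod.mk_right_injective x), card_univ, ZMod.card]
    _ ≤ nVtx K L σ s := card_le_card fun v hv => by
        obtain ⟨y, -, rfl⟩ := mem_image.mp hv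
        simpa using h y

lemma exists_ne_of_nVtx_lt (σ : Config K L) (x : ZMod K) (s : Spin) (ha : nVtx K L σ s < L) :
    ∃ y, σ (x, y) ≠ s := by
  by_contra! h
  exact (le_nVtx_of_col_eq σ x s h).not_gt ha

lemma two_mul_card_zeroCols_le (σ : Config K L) (ha : nVtx K L σ 0 < L) :
    2 * #(zeroCols σ) ≤ ∑ x, colSum perimWeight σ x := by
  calc 2 * #(zeroCols σ) = ∑ _x ∈ zeroCols σ, 2 := by rw [sum_const, smul_eq_mul, mul_comm]
    _ ≤ ∑ x ∈ zeroCols σ, colSum perimWeight σ x := sum_le_sum fun x hx => by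
        obtain ⟨y₁, hy₁⟩ := (mem_filter.mp hx).2
        obtain ⟨y₂, hy₂⟩ := exists_ne_of_nVtx_lt σ x 0 ha
        have h := perimWeight_isPseudoDist.two_mul_le_sum_cycle (fun y => σ (x, y)) y₁ y₂
        rwa [hy₁, perimWeight_zero_left _ hy₂] at h
    _ ≤ ∑ x, colSum perimWeight σ x := sum_le_sum_of_subset (subset_univ _)

lemma two_mul_card_zeroCols_add_le (σ : Config K L) (haK : nVtx K L σ 0 < K)
    (haL : nVtx K L σ 0 < L) :
    2 * (#(zeroCols σ) + #(zeroCols (transpose σ))) ≤ edgeSum perimWeight σ := by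
  have hcols := two_mul_card_zeroCols_le σ haL
  have hrows := two_mul_card_zeroCols_le (transpose σ) (by rwa [nVtx_transpose])
  rw [edgeSum_eq_sum_colSum]
  omega

lemma nVtx_le_succ_of_singleFlip {σ σ' : Config K L} (h : SingleFlip K L σ σ') (s : Spin) :
    nVtx K L σ' s ≤ nVtx K L σ s + 1 := by
  obtain ⟨v, -, hv⟩ := h
  refine (card_le_card fun w hw => ?_).trans (card_insert_le v _)
  rw [mem_insert, mem_filter]
  rw [mem_filter] at hw
  by_cases hwv : w = v
  · exact .inl hwv
  · exact .inr ⟨mem_univ _, (hv w hwv).trans hw.2⟩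

end Isoperimetry

section Arithmetic

lemma two_mul_le_add_of_lt_mul {ℓ c r : ℕ} (h : ℓ * (ℓ - 1) < c * r) : 2 * ℓ ≤ c + r := by
  obtain _ | m := ℓ
  · omega
  simp only [Nat.add_sub_cancel] at h
  by_contra! hcr
  nlinarith [sq_nonneg ((c : ℤ) - r)]

lemma mul_two_mul_sub_one_le {ℓ a c r : ℕ} (hcr : a ≤ c * r) (hℓ : a ≤ ℓ * (ℓ - 1)) :
    a * (2 * ℓ - 1) ≤ ℓ * (ℓ - 1) * (c + r) := by
  obtain _ | m := ℓ
  · simp_all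
  simp only [Nat.add_sub_cancel, show 2 * (m + 1) - 1 = 2 * m + 1 by omega] at hℓ ⊢
  rcases le_or_gt (2 * m + 1) (c + r) with hs | hs
  · calc a * (2 * m + 1) ≤ (m + 1) * m * (2 * m + 1) := Nat.mul_le_mul_right _ (by linarith)
      _ ≤ (m + 1) * m * (c + r) := Nat.mul_le_mul_left _ hs
  · have hamgm : 4 * (c * r) ≤ (c + r) * (c + r) := by nlinarith [sq_nonneg ((c : ℤ) - r)]
    refine Nat.le_of_mul_le_mul_left ?_ (show 0 < 4 by norm_num)
    calc 4 * (a * (2 * m + 1)) ≤ 4 * (c * r) * (2 * m + 1) := by nlinarith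
      _ ≤ (c + r) * (c + r) * (2 * m + 1) := Nat.mul_le_mul_right _ hamgm
      _ ≤ (c + r) * (2 * m) * (2 * m + 1) := by gcongr; omega
      _ ≤ 4 * ((m + 1) * m * (c + r)) := by nlinarith

lemma exists_eq_of_succ_le_add_one {f : ℕ → ℕ} {N c : ℕ}
    (hstep : ∀ n < N, f (n + 1) ≤ f n + 1) (h₀ : f 0 ≤ c) (hN : c ≤ f N) :
    ∃ n ≤ N, f n = c := by
  induction N with
  | zero => exact ⟨0, le_rfl, by omega⟩
  | succ N ih =>
    by_cases hc : c ≤ f N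
    · obtain ⟨n, hn, hfn⟩ := ih (fun n hn => hstep n (by omega)) hc
      exact ⟨n, by omega, hfn⟩
    · exact ⟨N + 1, le_rfl, by have := hstep N (by omega); omega⟩

end Arithmetic

namespace Admissible

variable {K L : ℕ} {C : Couplings}

lemma γ1_pos (hadm : Admissible K L C) : 0 < C.γ1 := by
  simpa [Couplings.γ1] using hadm.h1122

lemma γ23_pos (hadm : Admissible K L C) : 0 < C.γ23 := by
  have := hadm.pos22; have := hadm.pos23; rw [Couplings.γ23]; linarith

lemma γ1_add_two_mul_γ23_le (hadm : Admissible K L C) :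
    C.γ1 + 2 * C.γ23 ≤ C.γ12 + C.γ1 / 2 := by
  linarith [hadm.hC]

lemma one_lt_ratio (hadm : Admissible K L C) : 1 < (2 * C.γ12 + C.γ1) / (2 * C.γ1) := by
  have := hadm.γ1_pos
  rw [one_lt_div (by positivity)]
  linarith [hadm.γ1_add_two_mul_γ23_le, hadm.γ23_pos]

lemma two_le_lstar (hadm : Admissible K L C) : 2 ≤ lstar C :=
  Nat.lt_ceil.mpr (by exact_mod_cast hadm.one_lt_ratio)

lemma lstar_mul_add_one_lt (hadm : Admissible K L C) : lstar C * (lstar C - 1) + 1 < K := by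
  have hK := hadm.hK
  obtain ⟨m, hm⟩ : ∃ m, lstar C = m + 2 :=
    ⟨lstar C - 2, by have := hadm.two_le_lstar; omega⟩
  rw [hm, show m + 2 - 1 = m + 1 by omega]
  rw [hm] at hK
  nlinarith

lemma γ1_mul_lstar_sub_one_le (hadm : Admissible K L C) :
    C.γ1 * ((lstar C : ℝ) - 1) ≤ C.γ12 + C.γ1 / 2 := by
  have hγ1 := hadm.γ1_pos
  have hceil : (lstar C : ℝ) < _ + 1 :=
    Nat.ceil_lt_add_one (zero_le_one.trans hadm.one_lt_ratio.le)
  have hratio : C.γ1 * ((2 * C.γ12 + C.γ1) / (2 * C.γ1)) = C.γ12 + C.γ1 / 2 := by field_simp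
  nlinarith

lemma Γstar_eq (hadm : Admissible K L C) :
    Γstar C = 4 * (C.γ12 + C.γ1 / 2) * lstar C
      - 2 * C.γ1 * ((lstar C : ℝ) ^ 2 - lstar C + 1) := by
  have hγ1 := hadm.γ1_pos
  have hx : (C.γ12 + C.γ1 / 2) / C.γ1 = (2 * C.γ12 + C.γ1) / (2 * C.γ1) := by
    field_simp
  have hceil : ((⌈(C.γ12 + C.γ1 / 2) / C.γ1⌉ : ℤ) : ℝ) = lstar C := by
    rw [hx, lstar, natCast_ceil_eq_intCast_ceil (zero_le_one.trans hadm.one_lt_ratio.le)]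
  rw [Γstar, fh, hceil]

/-- (B) and `K ≥ 2ℓ*²` bound `γ₂₃`; what remains is a polynomial inequality in `ℓ*`. -/
lemma γ1_mul_le_mul_sub (hadm : Admissible K L C) :
    C.γ1 * ((lstar C : ℝ) * (lstar C - 1)) ≤
      (2 * lstar C - 1) * (C.γ12 + C.γ1 / 2 - 2 * C.γ23) := by
  have hγ1 := hadm.γ1_pos
  have hγ23 := hadm.γ23_pos
  have hA := hadm.γ1_mul_lstar_sub_one_le
  have hB := hadm.hB
  rw [← Γstar, hadm.Γstar_eq] at hB
  have hℓ : (2 : ℝ) ≤ lstar C := by exact_mod_cast hadm.two_le_lstar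
  have hK : 2 * (lstar C : ℝ) ^ 2 ≤ K := by exact_mod_cast hadm.hK
  set ℓ : ℝ := (lstar C : ℝ)
  set A := C.γ12 + C.γ1 / 2
  have hcoeff : (0 : ℝ) ≤ 4 * ℓ ^ 3 - 10 * ℓ ^ 2 + 6 * ℓ - 1 := by
    nlinarith [mul_nonneg (sub_nonneg.mpr hℓ) (sq_nonneg ℓ)]
  nlinarith [mul_le_mul_of_nonneg_left hK hγ23.le, mul_nonneg hγ1.le (sq_nonneg (ℓ - 2)),
    mul_le_mul_of_nonneg_left hA hcoeff]

end Admissible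

section EnergyBounds

def interfaceWeight (i j : Spin) : ℕ := mixedWeight i j + 2 * perimWeight i j

variable {K L : ℕ} [NeZero K] [NeZero L] {C : Couplings}

lemma edgeSum_interfaceWeight (σ : Config K L) :
    edgeSum interfaceWeight σ = edgeSum mixedWeight σ + 2 * edgeSum perimWeight σ := by
  simp only [edgeSum, interfaceWeight, sum_add_distrib, mul_sum]

lemma cast_lstar_mul (C : Couplings) (hℓ : 1 ≤ lstar C) :
    ((lstar C * (lstar C - 1) : ℕ) : ℝ) = lstar C * ((lstar C : ℝ) - 1) := by
  push_cast [Nat.cast_sub hℓ]; ring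

lemma Γstar_le_H_sub_of_nVtx_eq (hadm : Admissible K L C) (σ : Config K L)
    (ha : nVtx K L σ 0 = lstar C * (lstar C - 1) + 1) :
    Γstar C ≤ H K L C σ - H K L C (const K L 1) := by
  have hℓ := hadm.two_le_lstar
  have haK : nVtx K L σ 0 < K := ha ▸ hadm.lstar_mul_add_one_lt
  have hperim := two_mul_card_zeroCols_add_le σ haK (haK.trans_le hadm.hKL)
  have hlines := two_mul_le_add_of_lt_mul
    (show lstar C * (lstar C - 1) < #(zeroCols σ) * #(zeroCols (transpose σ)) by
      have := nVtx_zero_le_card_mul σ; omega)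
  have hP : 4 * (lstar C : ℝ) ≤ edgeSum perimWeight σ := by exact_mod_cast (by omega)
  have ha' : (nVtx K L σ 0 : ℝ) = lstar C * ((lstar C : ℝ) - 1) + 1 := by
    rw [ha, Nat.cast_succ, cast_lstar_mul C (by omega)]
  have hA : 0 ≤ C.γ12 + C.γ1 / 2 := by
    linarith [hadm.γ1_add_two_mul_γ23_le, hadm.γ1_pos, hadm.γ23_pos]
  have hE : 0 ≤ C.γ23 * edgeSum mixedWeight σ := mul_nonneg hadm.γ23_pos.le (Nat.cast_nonneg _)
  rw [H_sub_H_const_one C hadm.h2233 hadm.h1213, hadm.Γstar_eq, ha']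
  nlinarith [mul_le_mul_of_nonneg_left hP hA]

lemma γ23_mul_edgeSum_interfaceWeight_le (hadm : Admissible K L C) (σ : Config K L)
    (ha : nVtx K L σ 0 ≤ lstar C * (lstar C - 1)) :
    C.γ23 * edgeSum interfaceWeight σ ≤ H K L C σ - H K L C (const K L 1) := by
  have hℓ := hadm.two_le_lstar
  have haK : nVtx K L σ 0 < K := by have := hadm.lstar_mul_add_one_lt; omega
  have hperim := two_mul_card_zeroCols_add_le σ haK (haK.trans_le hadm.hKL)
  have hiso := mul_two_mul_sub_one_le (nVtx_zero_le_card_mul σ) ha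
  have hiso' : (nVtx K L σ 0 : ℝ) * (2 * lstar C - 1) ≤
      lstar C * ((lstar C : ℝ) - 1) * (#(zeroCols σ) + #(zeroCols (transpose σ)) : ℕ) := by
    have h := (Nat.cast_le (α := ℝ)).mpr hiso
    push_cast [Nat.cast_sub (show 1 ≤ 2 * lstar C by omega),
      Nat.cast_sub (show 1 ≤ lstar C by omega)] at h ⊢
    exact h
  have hℓ' : (0 : ℝ) < 2 * lstar C - 1 := by
    have : (2 : ℝ) ≤ lstar C := by exact_mod_cast hℓ
    linarith
  have hbulk : C.γ1 * nVtx K L σ 0 ≤ (C.γ12 + C.γ1 / 2 - 2 * C.γ23) *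
      (#(zeroCols σ) + #(zeroCols (transpose σ)) : ℕ) := by
    refine le_of_mul_le_mul_right ?_ hℓ'
    calc _ ≤ C.γ1 * (lstar C * ((lstar C : ℝ) - 1)) *
          (#(zeroCols σ) + #(zeroCols (transpose σ)) : ℕ) := by
          nlinarith [mul_le_mul_of_nonneg_left hiso' hadm.γ1_pos.le]
      _ ≤ (2 * lstar C - 1) * (C.γ12 + C.γ1 / 2 - 2 * C.γ23) *
          (#(zeroCols σ) + #(zeroCols (transpose σ)) : ℕ) :=
          mul_le_mul_of_nonneg_right hadm.γ1_mul_le_mul_sub (Nat.cast_nonneg _)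
      _ = _ := by ring
  have hP : 2 * ((#(zeroCols σ) + #(zeroCols (transpose σ)) : ℕ) : ℝ) ≤
      edgeSum perimWeight σ := by exact_mod_cast hperim
  have hA : C.γ1 ≤ C.γ12 + C.γ1 / 2 - 2 * C.γ23 := by linarith [hadm.γ1_add_two_mul_γ23_le]
  rw [H_sub_H_const_one C hadm.h2233 hadm.h1213, edgeSum_interfaceWeight, Nat.cast_add,
    Nat.cast_mul, Nat.cast_two]
  nlinarith [mul_le_mul_of_nonneg_left hP (hadm.γ1_pos.le.trans hA)]

lemma edgeSum_interfaceWeight_le (hadm : Admissible K L C) (σ : Config K L)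
    (ha : nVtx K L σ 0 ≤ lstar C * (lstar C - 1))
    (hgap : H K L C σ - H K L C (const K L 1) < Γstar C) :
    edgeSum interfaceWeight σ ≤ 2 * K + 1 := by
  have h := (γ23_mul_edgeSum_interfaceWeight_le hadm σ ha).trans_lt hgap
  rw [Γstar, hadm.hB, mul_comm _ C.γ23] at h
  have h' : ((edgeSum interfaceWeight σ : ℕ) : ℝ) < (2 * K + 2 : ℕ) := by
    push_cast; linarith [lt_of_mul_lt_mul_left h hadm.γ23_pos.le]
  exact Nat.lt_succ_iff.mp (Nat.cast_lt.mp h')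

end EnergyBounds

section Lines

variable {K L : ℕ}

def ColConst (σ : Config K L) (x : ZMod K) : Prop := ∀ y y', σ (x, y) = σ (x, y')

def Spans (σ : Config K L) (s : Spin) : Prop :=
  (∀ x, ∃ y, σ (x, y) = s) ∧ ∀ y, ∃ x, σ (x, y) = s

lemma spans_transpose {σ : Config K L} {s : Spin} : Spans (transpose σ) s ↔ Spans σ s :=
  and_comm

variable [NeZero L]

lemma interfaceWeight_isPseudoDist : IsPseudoDist interfaceWeight :=
  ⟨by decide, by decide, by decide⟩

lemma one_le_interfaceWeight : ∀ i j, i ≠ j → 1 ≤ interfaceWeight i j := by decide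

lemma two_le_colSum_of_not_colConst {σ : Config K L} {x : ZMod K} (h : ¬ ColConst σ x) :
    2 ≤ colSum interfaceWeight σ x := by
  simp only [ColConst, not_forall] at h
  obtain ⟨y, y', hne⟩ := h
  have := interfaceWeight_isPseudoDist.two_mul_le_sum_cycle (fun y => σ (x, y)) y y'
  have := one_le_interfaceWeight _ _ hne
  unfold colSum
  omega

variable [NeZero K]

lemma two_mul_le_sum_colSum {σ : Config K L} (h : ∀ x, ¬ ColConst σ x) :
    2 * K ≤ ∑ x, colSum interfaceWeight σ x := by
  calc 2 * K = ∑ _x : ZMod K, 2 := by simp [ZMod.card, mul_comm]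
    _ ≤ _ := sum_le_sum fun x _ => two_le_colSum_of_not_colConst (h x)

lemma two_mul_sub_one_le_sum_colSum {σ : Config K L} (x₀ : ZMod K)
    (h : ∀ x, x ≠ x₀ → ¬ ColConst σ x) :
    2 * (K - 1) ≤ ∑ x, colSum interfaceWeight σ x := by
  calc 2 * (K - 1) = ∑ _x ∈ univ.erase x₀, 2 := by
        simp [card_erase_of_mem, ZMod.card, mul_comm]
    _ ≤ ∑ x ∈ univ.erase x₀, colSum interfaceWeight σ x :=
        sum_le_sum fun x hx => two_le_colSum_of_not_colConst (h x (ne_of_mem_erase hx))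
    _ ≤ _ := sum_le_sum_of_subset (erase_subset _ _)

/-- The broken columns cost `2K`, leaving at most `1` for the rows. -/
lemma colConst_transpose_of_forall_not_colConst {σ : Config K L}
    (h : ∀ x, ¬ ColConst σ x) (hM : edgeSum interfaceWeight σ ≤ 2 * K + 1) (y : ZMod L) :
    ColConst (transpose σ) y := by
  by_contra hy
  have hcols := two_mul_le_sum_colSum h
  have hrow := two_le_colSum_of_not_colConst hy
  have := single_le_sum (fun y _ => Nat.zero_le (colSum interfaceWeight (transpose σ) y))
    (mem_univ y)
  rw [edgeSum_eq_sum_colSum] at hM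
  omega

lemma le_nVtx_of_spans {σ : Config K L} {s : Spin} (h : Spans σ s) : K ≤ nVtx K L σ s := by
  choose y hy using h.1
  calc K = #(univ.image fun x => (x, y x)) := by
        rw [card_image_of_injective _ fun a b hab => (Prod.mk.inj hab).1, card_univ, ZMod.card]
    _ ≤ nVtx K L σ s := card_le_card fun v hv => by
        obtain ⟨x, -, rfl⟩ := mem_image.mp hv
        simpa using hy x

theorem colConst_or_spans {σ : Config K L} (hMK : edgeSum interfaceWeight σ ≤ 2 * K + 1)
    (hML : edgeSum interfaceWeight σ ≤ 2 * L + 1) :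
    (∀ x, ColConst σ x) ∨ (∀ y, ColConst (transpose σ) y) ∨ ∃ s, Spans σ s := by
  by_cases hcol : ∃ x, ColConst σ x
  · by_cases hrow : ∃ y, ColConst (transpose σ) y
    · -- a constant column and a constant row share their value, which then meets every line
      obtain ⟨x, hx⟩ := hcol
      obtain ⟨y, hy⟩ := hrow
      exact .inr <| .inr ⟨σ (x, y), fun x' => ⟨y, hy x' x⟩, fun y' => ⟨x, hx y' y⟩⟩
    · push Not at hrow
      exact .inl (colConst_transpose_of_forall_not_colConst hrow (by rwa [edgeSum_transpose]))
  · push Not at hcol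
    exact .inr <| .inl (colConst_transpose_of_forall_not_colConst hcol hMK)

end Lines

section Invariant

variable {K L : ℕ}

lemma spin_cases : ∀ s : Spin, s = 0 ∨ s = 1 ∨ s = 2 := by decide

def colStripe (x₀ : ZMod K) : Config K L := fun v => if v.1 = x₀ then 2 else 1

def InitialSide (σ : Config K L) : Prop :=
  Spans σ 1 ∨ (∃ x₀, σ = colStripe x₀) ∨ ∃ y₀, transpose σ = colStripe y₀

lemma initialSide_transpose {σ : Config K L} : InitialSide (transpose σ) ↔ InitialSide σ := by
  rw [InitialSide, InitialSide, spans_transpose, transpose_transpose, or_comm (a := ∃ _, _)]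

lemma initialSide_const_one : InitialSide (const K L 1) :=
  .inl ⟨fun _ => ⟨0, rfl⟩, fun _ => ⟨0, rfl⟩⟩

lemma colStripe_ne_const_two [NeZero K] (hK : 2 ≤ K) (x₀ : ZMod K) :
    colStripe x₀ ≠ const K L 2 := fun h => by
  obtain ⟨x, hx⟩ := Fintype.exists_ne_of_one_lt_card (by rw [ZMod.card]; omega) x₀
  simpa [colStripe, const, hx] using congrFun h (x, 0)

lemma not_initialSide_const_two [NeZero K] [NeZero L] (hK : 2 ≤ K) (hL : 2 ≤ L) :
    ¬ InitialSide (const K L 2) := by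
  rintro (⟨h, -⟩ | ⟨x₀, h⟩ | ⟨y₀, h⟩)
  · simpa [const] using h 0
  · exact colStripe_ne_const_two hK x₀ h.symm
  · exact colStripe_ne_const_two hL y₀ h.symm

variable {σ σ' : Config K L}

lemma singleFlip_transpose (h : SingleFlip K L σ σ') :
    SingleFlip L K (transpose σ) (transpose σ') := by
  obtain ⟨v, hv, hrest⟩ := h
  exact ⟨v.swap, hv, fun w hw => hrest w.swap fun h => hw (by rw [← h, Prod.swap_swap])⟩

lemma not_singleFlip_of_colConst [NeZero L] (hL : 2 ≤ L) (hσ : ∀ x, ColConst σ x)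
    (hσ' : ∀ x, ColConst σ' x) : ¬ SingleFlip K L σ σ' := by
  rintro ⟨v, hv, hrest⟩
  obtain ⟨y, hy⟩ := Fintype.exists_ne_of_one_lt_card (by rw [ZMod.card]; omega) v.2
  exact hv <| calc
    σ v = σ (v.1, y) := hσ v.1 v.2 y
    _ = σ' (v.1, y) := hrest _ fun h => hy (congrArg Prod.snd h)
    _ = σ' v := hσ' v.1 y v.2

lemma InitialSide.of_colConst [NeZero K] [NeZero L] (hI : InitialSide σ)
    (hflip : SingleFlip K L σ σ') (hσ' : ∀ x, ColConst σ' x) (ha : nVtx K L σ' 0 < L)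
    (hK : 2 ≤ K) (hL : 2 ≤ L) : InitialSide σ' := by
  obtain ⟨v, -, hrest⟩ := id hflip
  have hsame : ∀ x y, x ≠ v.1 → σ (x, y) = σ' (x, y) := fun x y hx =>
    hrest _ fun h => hx (congrArg Prod.fst h)
  rcases hI with h1 | ⟨x₀, rfl⟩ | ⟨y₀, hy₀⟩
  · have hone : ∀ x y, x ≠ v.1 → σ' (x, y) = 1 := fun x y hx => by
      obtain ⟨y₁, hy₁⟩ := h1.1 x
      rw [hσ' x y y₁, ← hsame x y₁ hx, hy₁]
    rcases spin_cases (σ' (v.1, 0)) with h | h | h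
    · exact absurd (le_nVtx_of_col_eq σ' v.1 0 fun y => (hσ' _ _ _).trans h) ha.not_ge
    · have : σ' = const K L 1 := funext fun w => by
        by_cases hw : w.1 = v.1
        · rw [const, ← h, ← hw]; exact hσ' _ _ _
        · exact hone w.1 w.2 hw
      exact this ▸ initialSide_const_one
    · refine .inr <| .inl ⟨v.1, funext fun w => ?_⟩
      by_cases hw : w.1 = v.1
      · rw [colStripe, if_pos hw, ← h, ← hw]; exact hσ' _ _ _
      · rw [colStripe, if_neg hw]; exact hone w.1 w.2 hw
  · exact absurd hflip (not_singleFlip_of_colConst hL (fun _ _ _ => rfl) hσ')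
  · obtain ⟨x, hx⟩ := Fintype.exists_ne_of_one_lt_card (by rw [ZMod.card]; omega) v.1
    obtain ⟨y, hy⟩ := Fintype.exists_ne_of_one_lt_card (by rw [ZMod.card]; omega) y₀
    have h₂ := congrFun hy₀ (y₀, x)
    have h₁ := congrFun hy₀ (y, x)
    simp only [transpose, colStripe, if_neg hy, hsame _ _ hx] at h₁ h₂
    exact absurd (h₂.symm.trans (hσ' x y₀ y) |>.trans h₁) (by decide)

lemma two_mul_sub_one_le_sum_colSum_of_spans [NeZero K] [NeZero L] (h1 : Spans σ 1)
    (h2 : Spans σ' 2) (hflip : SingleFlip K L σ σ') :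
    2 * (K - 1) ≤ ∑ x, colSum interfaceWeight σ x := by
  obtain ⟨v, -, hrest⟩ := hflip
  refine two_mul_sub_one_le_sum_colSum v.1 fun x hx hc => ?_
  obtain ⟨y₁, hy₁⟩ := h1.1 x
  obtain ⟨y₂, hy₂⟩ := h2.1 x
  have h := hc y₁ y₂
  rw [hy₁, hrest (x, y₂) fun h => hx (congrArg Prod.fst h), hy₂] at h
  exact absurd h (by decide)

lemma not_spans_two_of_colStripe [NeZero K] (hK : 3 ≤ K) {x₀ : ZMod K}
    (hflip : SingleFlip K L (colStripe x₀) σ') : ¬ Spans σ' 2 := by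
  obtain ⟨v, -, hrest⟩ := hflip
  obtain ⟨x, hx₀, hxv⟩ := exists_ne_and_ne_of_two_lt_card (by rw [ZMod.card]; omega) x₀ v.1
  rintro ⟨hcols, -⟩
  obtain ⟨y, hy⟩ := hcols x
  rw [← hrest (x, y) fun h => hxv (congrArg Prod.fst h)] at hy
  simp [colStripe, hx₀] at hy

lemma InitialSide.not_spans_two [NeZero K] [NeZero L] (hI : InitialSide σ)
    (hflip : SingleFlip K L σ σ') (hM : edgeSum interfaceWeight σ ≤ 2 * K + 1) (hK : 3 ≤ K)
    (hL : 3 ≤ L) : ¬ Spans σ' 2 := by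
  intro h2
  rcases hI with h1 | ⟨x₀, rfl⟩ | ⟨y₀, hy₀⟩
  · have hcols := two_mul_sub_one_le_sum_colSum_of_spans h1 h2 hflip
    have hrows := two_mul_sub_one_le_sum_colSum_of_spans (spans_transpose.mpr h1)
      (spans_transpose.mpr h2) (singleFlip_transpose hflip)
    rw [edgeSum_eq_sum_colSum] at hM
    omega
  · exact not_spans_two_of_colStripe hK hflip h2
  · exact not_spans_two_of_colStripe hL (hy₀ ▸ singleFlip_transpose hflip)
      (spans_transpose.mpr h2)

theorem InitialSide.singleFlip [NeZero K] [NeZero L] (hI : InitialSide σ)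
    (hflip : SingleFlip K L σ σ') (haK : nVtx K L σ' 0 < K) (haL : nVtx K L σ' 0 < L)
    (hM : edgeSum interfaceWeight σ ≤ 2 * K + 1)
    (hM' : edgeSum interfaceWeight σ' ≤ 2 * K + 1) (hK : 3 ≤ K) (hKL : K ≤ L) :
    InitialSide σ' := by
  rcases colConst_or_spans hM' (by omega) with hcol | hrow | ⟨s, hs⟩
  · exact hI.of_colConst hflip hcol haL (by omega) (by omega)
  · exact initialSide_transpose.mp <| (initialSide_transpose.mpr hI).of_colConst
      (singleFlip_transpose hflip) hrow (by rwa [nVtx_transpose]) (by omega) (by omega)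
  · rcases spin_cases s with rfl | rfl | rfl
    · exact absurd (le_nVtx_of_spans hs) haK.not_ge
    · exact .inl hs
    · exact absurd hs (hI.not_spans_two hflip hM hK (by omega))

end Invariant

section Paths

lemma Path.forall_of_step {K L : ℕ} (ω : Path K L) {P : Config K L → Prop}
    (h₀ : P (ω.toFun 0)) (hstep : ∀ n < ω.len, P (ω.toFun n) → P (ω.toFun (n + 1))) :
    ∀ n ≤ ω.len, P (ω.toFun n) := by
  intro n hn
  induction n with
  | zero => exact h₀
  | succ n ih => exact hstep n hn (ih (by omega))

variable {K L : ℕ} [NeZero K] [NeZero L]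

noncomputable def Path.sweep {r s : Spin} (hrs : r ≠ s) : Path K L where
  len := Fintype.card (Vtx K L)
  toFun n v := if (Fintype.equivFin (Vtx K L) v : ℕ) < n then s else r
  step n hn := by
    refine ⟨(Fintype.equivFin (Vtx K L)).symm ⟨n, hn⟩, by simpa using hrs, fun w hw => ?_⟩
    have hne : (Fintype.equivFin (Vtx K L) w : ℕ) ≠ n := fun h =>
      hw (by rw [← Fin.ext h (b := ⟨n, hn⟩), Equiv.symm_apply_apply])
    simp only [Nat.lt_succ_iff_lt_or_eq, hne, or_false]

lemma Path.sweep_fromTo {r s : Spin} (hrs : r ≠ s) :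
    (Path.sweep hrs : Path K L).FromTo (const K L r) (const K L s) :=
  ⟨funext fun _ => by simp [Path.sweep, const],
    funext fun _ => by simp only [Path.sweep, const, Fin.is_lt, if_true]⟩

lemma Path.le_height (ω : Path K L) (C : Couplings) {n : ℕ} (hn : n ≤ ω.len) :
    H K L C (ω.toFun n) ≤ ω.height C :=
  le_sup' (fun k => H K L C (ω.toFun k)) (mem_range.mpr (Nat.lt_succ_of_le hn))

lemma le_Phi (C : Couplings) {σ σ' : Config K L} {t : ℝ} (ω₀ : Path K L)
    (hω₀ : ω₀.FromTo σ σ') (h : ∀ ω : Path K L, ω.FromTo σ σ' → t ≤ ω.height C) :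
    t ≤ Phi K L C σ σ' :=
  le_csInf ⟨_, ω₀, hω₀, rfl⟩ fun _ ⟨ω, hω, hx⟩ => hx ▸ h ω hω

lemma nVtx_const_of_ne {r s : Spin} (hrs : r ≠ s) : nVtx K L (const K L r) s = 0 :=
  card_eq_zero.mpr (filter_eq_empty_iff.mpr fun _ _ => hrs)

variable {C : Couplings}

theorem Path.add_Γstar_le_height (hadm : Admissible K L C) (ω : Path K L)
    (hω : ω.FromTo (const K L 1) (const K L 2)) :
    H K L C (const K L 1) + Γstar C ≤ ω.height C := by
  by_contra! hlow
  have hgap : ∀ n ≤ ω.len, H K L C (ω.toFun n) - H K L C (const K L 1) < Γstar C :=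
    fun n hn => by linarith [ω.le_height C hn]
  have hℓ := hadm.two_le_lstar
  have hK : 3 ≤ K := by nlinarith [hadm.hK]
  by_cases hcrit : ∃ n ≤ ω.len, lstar C * (lstar C - 1) + 1 ≤ nVtx K L (ω.toFun n) 0
  · obtain ⟨n, hn, hcr⟩ := hcrit
    obtain ⟨m, hm, hfm⟩ := exists_eq_of_succ_le_add_one (f := fun k => nVtx K L (ω.toFun k) 0)
      (fun k hk => nVtx_le_succ_of_singleFlip (ω.step k (by omega)) 0)
      (by simp [hω.1, nVtx_const_of_ne]) hcr
    exact (Γstar_le_H_sub_of_nVtx_eq hadm _ hfm).not_gt (hgap m (by omega))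
  push Not at hcrit
  have hsub : ∀ n ≤ ω.len, nVtx K L (ω.toFun n) 0 ≤ lstar C * (lstar C - 1) :=
    fun n hn => Nat.lt_succ_iff.mp (hcrit n hn)
  have haK : ∀ n ≤ ω.len, nVtx K L (ω.toFun n) 0 < K :=
    fun n hn => (hsub n hn).trans_lt (Nat.lt_of_succ_lt hadm.lstar_mul_add_one_lt)
  have hM := fun n hn => edgeSum_interfaceWeight_le hadm _ (hsub n hn) (hgap n hn)
  have hside := ω.forall_of_step (P := InitialSide) (hω.1 ▸ initialSide_const_one)
    fun n hn hI => hI.singleFlip (ω.step n hn) (haK (n + 1) hn)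
      ((haK (n + 1) hn).trans_le hadm.hKL) (hM n hn.le) (hM (n + 1) hn) hK hadm.hKL
  exact not_initialSide_const_two (by omega) (by linarith [hadm.hKL])
    (hω.2 ▸ hside ω.len le_rfl)

end Paths

theorem communication_height_lower_bound_between_metastable (K L : ℕ) [NeZero K] [NeZero L] (C : Couplings)
    (hadm : Admissible K L C) :
    Γstar C ≤ Gamma K L C (const K L 1) (const K L 2) := by
  have hPhi := le_Phi C _ (Path.sweep_fromTo (by decide)) fun ω hω =>
    ω.add_Γstar_le_height hadm hω
  rw [Gamma]
  linarith

end GenPotts
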